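/- arXiv:1810.07244 — 3 statements merged into one kernel-verified Lean document; each statement's English description precedes it below -/
import Mathlib

section
/- Let α be an irrational real number and let R_α denote the rotation x ↦ x + α on the circle ℝ/ℤ. Then the centralizer of R_α in the group of homeomorphisms of the circle is exactly the group of rotations {R_β : β ∈ ℝ/ℤ}. -/
/-!
A homeomorphism `h` commuting with `R_α` also commutes with every translation by an element of
the closed subgroup generated by `α`. For irrational `α` that subgroup is the whole circle, so
`h (x) = h (0 + x) = h 0 + x` for all `x`.
-/

section CommutingTranslations

variable {G : Type*} [AddGroup G]

def commutingTranslations (h : G → G) : AddSubgroup G where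
  carrier := {g | ∀ x, h (x + g) = h x + g}
  zero_mem' := by simp
  add_mem' {g g'} hg hg' x := by
    rw [← add_assoc, hg', hg, add_assoc]
  neg_mem' {g} hg x := by
    rw [eq_add_neg_iff_add_eq, ← hg, neg_add_cancel_right]

variable [TopologicalSpace G] [ContinuousAdd G] [T2Space G] {h : G → G}

theorem isClosed_commutingTranslations (hh : Continuous h) :
    IsClosed (commutingTranslations h : Set G) := by
  simp only [commutingTranslations, AddSubgroup.coe_set_mk, AddSubmonoid.coe_set_mk,
    AddSubsemigroup.coe_set_mk, Set.ofPred_forall]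
  exact isClosed_iInter fun x ↦ isClosed_eq (by fun_prop) (by fun_prop)

theorem commutingTranslations_eq_top_of_denseRange (hh : Continuous h) {a : G}
    (ha : a ∈ commutingTranslations h) (hdense : DenseRange (· • a : ℤ → G)) :
    commutingTranslations h = ⊤ := by
  have hrange : Set.range (· • a : ℤ → G) ⊆ commutingTranslations h := by
    rintro _ ⟨n, rfl⟩
    exact zsmul_mem ha n
  rw [eq_top_iff, ← SetLike.coe_subset_coe, AddSubgroup.coe_top, ← hdense.closure_range]
  exact (isClosed_commutingTranslations hh).closure_subset_iff.2 hrange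

end CommutingTranslations

/-- For irrational `α`, the centralizer of the rotation `R_α : x ↦ x + α` in the
group of homeomorphisms of the circle `ℝ/ℤ` is exactly the group of rotations. -/
theorem stmt_3 (α : ℝ) (hα : Irrational α) :
    {h : UnitAddCircle ≃ₜ UnitAddCircle |
        ∀ x, h (x + (α : UnitAddCircle)) = h x + (α : UnitAddCircle)}
      = {h : UnitAddCircle ≃ₜ UnitAddCircle | ∃ β : UnitAddCircle, ∀ x, h x = x + β} := by
  ext h
  constructor
  · intro hcomm
    have hdense : DenseRange (· • (α : UnitAddCircle) : ℤ → UnitAddCircle) :=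
      AddCircle.denseRange_zsmul_coe_iff.2 (by simpa using hα)
    have htop := commutingTranslations_eq_top_of_denseRange h.continuous hcomm hdense
    refine ⟨h 0, fun x ↦ ?_⟩
    have hx : x ∈ commutingTranslations h := htop ▸ AddSubgroup.mem_top x
    simpa [add_comm] using hx 0
  · rintro ⟨β, hβ⟩ x
    rw [hβ, hβ, add_right_comm]
end

section
/- The restriction of the rotation number map ρ to the centralizer Z⁰(h) of a circle homeomorphism h conjugate to an irrational rotation is an injective continuous group homomorphism into S¹ = ℝ/ℤ. -/
open Classical

/-- The rotation number of a circle homeomorphism, defined via the translation number of a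
(chosen) monotone degree-one lift, and `0` if no such lift exists. -/
noncomputable def circleRotationNumber (g : UnitAddCircle ≃ₜ UnitAddCircle) : UnitAddCircle :=
  if h : ∃ G : CircleDeg1Lift, ∀ x : ℝ, ((G x : ℝ) : UnitAddCircle) = g (x : UnitAddCircle) then
    ((h.choose.translationNumber : ℝ) : UnitAddCircle)
  else 0

/-! A homeomorphism `g` commuting with `h` is conjugated by `φ` to a continuous map `ψ` with
`ψ (x + α) = ψ x + α`; as the multiples of the irrational `α` are dense, `ψ` is a rotation, so
`g = φ⁻¹ ∘ R_β ∘ φ`. Everything thus reduces to the map `β ↦ ρ (φ⁻¹ ∘ R_β ∘ φ)`.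

Lifts of circle homeomorphisms are monotone and surjective, hence continuous, so two lifts of the
same map differ by an integer and `ρ` may be computed from any lift. For `β` near `0`,
`φ⁻¹ ∘ R_β ∘ φ` moves every point by less than `ε` (compactness), so it has a lift with
displacement, hence translation number, in `[-ε, ε]`; a general conjugated rotation is an iterate
of such a map and lifts as well. Lifts of commuting conjugated rotations commute, which makes the
map additive; the bound near `0` makes it continuous; and a lift with integer translation number
has a fixed point, which only the trivial rotation has. -/

open Filter Set Topology
open Function (Surjective Injective IsFixedPt comp_apply iterate_succ')

local notation "τ" => CircleDeg1Lift.translationNumber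

lemma UnitAddCircle.coe_eq_coe_iff {x y : ℝ} :
    (x : UnitAddCircle) = y ↔ ∃ m : ℤ, x = y + m := by
  rw [← sub_eq_zero, ← AddCircle.coe_sub, AddCircle.coe_eq_zero_iff]
  simp only [zsmul_eq_mul, mul_one, eq_sub_iff_add_eq, eq_comm (a := x), add_comm]

lemma monotone_of_injective_of_map_add_one {F : ℝ → ℝ} (hc : Continuous F) (hi : Injective F)
    (h1 : ∀ x, F (x + 1) = F x + 1) : Monotone F := by
  refine (hc.strictMono_of_inj hi).elim StrictMono.monotone fun hanti => ?_
  linarith [h1 0, hanti (lt_add_one (0 : ℝ))]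

namespace CircleDeg1Lift

def IsLift (G : CircleDeg1Lift) (g : UnitAddCircle → UnitAddCircle) : Prop :=
  ∀ x : ℝ, ((G x : ℝ) : UnitAddCircle) = g x

variable {F G : CircleDeg1Lift} {f g : UnitAddCircle → UnitAddCircle}

lemma IsLift.mul (hF : IsLift F f) (hG : IsLift G g) : IsLift (F * G) (f ∘ g) := fun x => by
  rw [mul_apply, hF, hG, comp_apply]

lemma IsLift.pow (hG : IsLift G g) : ∀ n : ℕ, IsLift (G ^ n) g^[n]
  | 0 => fun x => rfl
  | n + 1 => by rw [pow_succ', iterate_succ']; exact hG.mul (hG.pow n)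

lemma IsLift.surjective (hG : IsLift G g) (hg : Surjective g) : Surjective G := by
  intro y
  obtain ⟨z, hz⟩ := hg y
  obtain ⟨x, rfl⟩ := QuotientAddGroup.mk_surjective z
  obtain ⟨m, hm⟩ := UnitAddCircle.coe_eq_coe_iff.mp ((hG x).trans hz)
  exact ⟨x - m, by rw [map_sub_int, hm, add_sub_cancel_right]⟩

lemma IsLift.continuous (hG : IsLift G g) (hg : Surjective g) : Continuous G :=
  G.monotone.continuous_of_surjective (hG.surjective hg)

lemma IsLift.exists_int_eq_add (hF : IsLift F g) (hG : IsLift G g) (hg : Surjective g) :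
    ∃ m : ℤ, ∀ x, F x = G x + m := by
  choose m hm using fun x => UnitAddCircle.coe_eq_coe_iff.mp ((hF x).trans (hG x).symm)
  have hcont : Continuous m := by
    refine Int.isClosedEmbedding_coe_real.continuous_iff.mpr ?_
    convert (hF.continuous hg).sub (hG.continuous hg) using 1
    ext x
    simp [hm x]
  exact ⟨m 0, fun x => by rw [hm x, PreconnectedSpace.constant inferInstance hcont]⟩

lemma translationNumber_eq_of_forall_eq_add_int {m : ℤ} (h : ∀ x, F x = G x + m) :
    τ F = τ G + m := by
  have hF : F = ↑(translate (Multiplicative.ofAdd (m : ℝ))) * G :=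
    ext fun x => by rw [mul_apply, translate_apply, h, add_comm]
  have hcomm : Commute (↑(translate (Multiplicative.ofAdd (m : ℝ))) : CircleDeg1Lift) G :=
    commute_iff_commute.mpr fun x => by simp only [translate_apply, map_int_add]
  rw [hF, translationNumber_mul_of_commute hcomm, translationNumber_translate, add_comm]

lemma IsLift.coe_translationNumber_eq (hF : IsLift F g) (hG : IsLift G g) (hg : Surjective g) :
    (τ F : UnitAddCircle) = τ G := by
  obtain ⟨m, hm⟩ := hF.exists_int_eq_add hG hg
  exact UnitAddCircle.coe_eq_coe_iff.mpr ⟨m, translationNumber_eq_of_forall_eq_add_int hm⟩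

lemma IsLift.translationNumber_mul (hF : IsLift F f) (hG : IsLift G g)
    (hfg : Function.Commute f g) (hs : Surjective (f ∘ g)) : τ (F * G) = τ F + τ G := by
  -- `F * G` and `G * F` lift the same map and have equal translation numbers, so they agree.
  have hGF : IsLift (G * F) (f ∘ g) := by rw [hfg.comp_eq]; exact hG.mul hF
  obtain ⟨m, hm⟩ := (hF.mul hG).exists_int_eq_add hGF hs
  have hτ : τ (F * G) = τ (G * F) := translationNumber_eq_of_semiconjBy (mul_assoc G F G)
  have hm0 : (m : ℝ) = 0 := by linarith [translationNumber_eq_of_forall_eq_add_int hm]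
  refine translationNumber_mul_of_commute (ext fun x => ?_)
  rw [hm x, hm0, add_zero]

lemma IsLift.exists_isFixedPt (hGc : Continuous G) (hG : IsLift G g)
    (hτ : (τ G : UnitAddCircle) = 0) : ∃ y, IsFixedPt g y := by
  obtain ⟨m, hm⟩ :=
    UnitAddCircle.coe_eq_coe_iff.mp (hτ.trans (AddCircle.coe_zero (p := 1)).symm)
  obtain ⟨x, hx⟩ := (G.translationNumber_eq_int_iff hGc).mp (hm.trans (zero_add _))
  exact ⟨x, (hG x).symm.trans (UnitAddCircle.coe_eq_coe_iff.mpr ⟨m, hx⟩)⟩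

lemma exists_continuous_isLift_of_forall_sub_mem {e : UnitAddCircle → UnitAddCircle}
    (hec : Continuous e) (hei : Injective e) {ε : ℝ} (hε : ε ≤ 2⁻¹)
    (he : ∀ y, e y - y ∈ ((↑) : ℝ → UnitAddCircle) '' Ioo (-ε) ε) :
    ∃ G : CircleDeg1Lift, Continuous G ∧ G.IsLift e ∧ |τ G| ≤ ε := by
  -- `L.symm` is the branch of the inverse of `ℝ → ℝ/ℤ` with values in `(-1/2, 1/2)`.
  let L := AddCircle.openPartialHomeomorphCoe (1 : ℝ) (-2⁻¹)
  have hL : ∀ y, L.symm (e y - y) ∈ Ioo (-ε) ε ∧ e y - y ∈ L.target := by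
    intro y
    obtain ⟨s, hs, hs'⟩ := he y
    have hs₁ : s ∈ L.source := Ioo_subset_Ioo (by linarith) (by norm_num; linarith) hs
    rw [← hs']
    exact ⟨(L.left_inv hs₁).symm ▸ hs, L.map_source hs₁⟩
  let d : ℝ → ℝ := fun x => L.symm (e x - x)
  have hd_int : ∀ (x : ℝ) (m : ℤ), d (x + m) = d x := fun x m => by
    simp only [d, UnitAddCircle.coe_eq_coe_iff.mpr ⟨m, rfl⟩]
  have hd_cont : Continuous d :=
    L.continuousOn_symm.comp_continuous
      ((hec.comp (AddCircle.continuous_mk' 1)).sub (AddCircle.continuous_mk' 1)) fun x => (hL x).2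
  let F : ℝ → ℝ := fun x => x + d x
  have hF_lift : ∀ x : ℝ, ((F x : ℝ) : UnitAddCircle) = e x := fun x => by
    simp only [F, d, AddCircle.coe_add]
    rw [show ((L.symm (e x - x) : ℝ) : UnitAddCircle) = L (L.symm (e x - x)) from rfl,
      L.right_inv (hL x).2, add_sub_cancel]
  have hF_int : ∀ (x : ℝ) (m : ℤ), F (x + m) = F x + m := fun x m => by
    simp only [F, hd_int]; ring
  have hF_inj : Injective F := by
    intro x y hxy
    have hexy : e x = e y := by rw [← hF_lift x, ← hF_lift y, hxy]
    obtain ⟨m, rfl⟩ := UnitAddCircle.coe_eq_coe_iff.mp (hei hexy)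
    have : (m : ℝ) = 0 := by linarith [hF_int y m]
    rw [this, add_zero]
  have hF_one : ∀ x, F (x + 1) = F x + 1 := fun x => by exact_mod_cast hF_int x 1
  have hF_cont : Continuous F := continuous_id.add hd_cont
  refine ⟨⟨⟨F, monotone_of_injective_of_map_add_one hF_cont hF_inj hF_one⟩, hF_one⟩,
    hF_cont, hF_lift, abs_le.mpr ⟨?_, ?_⟩⟩
  · exact le_translationNumber_of_add_le _ fun x => by
      show x + -ε ≤ x + d x
      linarith [(hL x).1.1]
  · exact translationNumber_le_of_le_add _ fun x => by
      show x + d x ≤ x + ε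
      linarith [(hL x).1.2]

end CircleDeg1Lift

def conjRotation (φ : UnitAddCircle ≃ₜ UnitAddCircle) (β : UnitAddCircle) :
    UnitAddCircle ≃ₜ UnitAddCircle :=
  (φ.trans (Homeomorph.addRight β)).trans φ.symm

section conjRotation

variable (φ : UnitAddCircle ≃ₜ UnitAddCircle)

@[simp]
lemma conjRotation_apply (β y : UnitAddCircle) : conjRotation φ β y = φ.symm (φ y + β) := rfl

lemma conjRotation_add (β γ : UnitAddCircle) :
    conjRotation φ (β + γ) = (conjRotation φ β).trans (conjRotation φ γ) := by
  ext y
  simp [add_assoc]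

lemma conjRotation_commute (β γ : UnitAddCircle) :
    Function.Commute (conjRotation φ β) (conjRotation φ γ) :=
  fun y => by simp only [conjRotation_apply, Homeomorph.apply_symm_apply, add_right_comm]

lemma conjRotation_iterate (γ : UnitAddCircle) (n : ℕ) :
    (conjRotation φ γ)^[n] = conjRotation φ (n • γ) := by
  induction n with
  | zero => ext y; simp
  | succ n ih => rw [iterate_succ', ih, succ_nsmul, conjRotation_add]; rfl

lemma eventually_forall_conjRotation_sub_mem {U : Set UnitAddCircle} (hU : U ∈ 𝓝 0) :
    ∀ᶠ γ in 𝓝 0, ∀ y, conjRotation φ γ y - y ∈ U := by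
  have hcont : Continuous fun p : UnitAddCircle × UnitAddCircle => conjRotation φ p.1 p.2 - p.2 :=
    (φ.symm.continuous.comp ((φ.continuous.comp continuous_snd).add continuous_fst)).sub
      continuous_snd
  have hnear : ∀ y ∈ univ, ∀ᶠ p in 𝓝 ((0 : UnitAddCircle), y),
      conjRotation φ p.1 p.2 - p.2 ∈ U := fun y _ =>
    hcont.continuousAt.eventually_mem (by simpa using hU)
  simpa using isCompact_univ.eventually_forall_of_forall_eventually hnear

lemma eventually_exists_isLift_conjRotation {ε : ℝ} (hε : 0 < ε) (hε' : ε ≤ 2⁻¹) :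
    ∀ᶠ γ in 𝓝 0, ∃ G : CircleDeg1Lift,
      Continuous G ∧ G.IsLift (conjRotation φ γ) ∧ |τ G| ≤ ε := by
  have hU : ((↑) : ℝ → UnitAddCircle) '' Ioo (-ε) ε ∈ 𝓝 0 :=
    (QuotientAddGroup.isOpenMap_coe _ isOpen_Ioo).mem_nhds ⟨0, ⟨by linarith, hε⟩, rfl⟩
  filter_upwards [eventually_forall_conjRotation_sub_mem φ hU] with γ hγ
  exact CircleDeg1Lift.exists_continuous_isLift_of_forall_sub_mem (conjRotation φ γ).continuous
    (conjRotation φ γ).injective hε' hγ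

lemma exists_isLift_conjRotation (β : UnitAddCircle) :
    ∃ G : CircleDeg1Lift, Continuous G ∧ G.IsLift (conjRotation φ β) := by
  -- `conjRotation φ β` is the `n`-th iterate of `conjRotation φ (β / n)`, close to the identity.
  obtain ⟨b, rfl⟩ := QuotientAddGroup.mk_surjective β
  have hsmall : Tendsto (fun n : ℕ => ((b / n : ℝ) : UnitAddCircle)) atTop (𝓝 0) :=
    ((AddCircle.continuous_mk' 1).tendsto 0).comp (tendsto_const_div_atTop_nhds_zero_nat b)
  obtain ⟨n, hn, G, hGc, hG, -⟩ := ((eventually_ne_atTop 0).and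
    (hsmall (eventually_exists_isLift_conjRotation φ (by norm_num) le_rfl))).exists
  have hdiv : n • ((b / n : ℝ) : UnitAddCircle) = b := by
    rw [← AddCircle.coe_nsmul, nsmul_eq_mul, mul_div_cancel₀ _ (Nat.cast_ne_zero.mpr hn)]
  refine ⟨G ^ n, G.continuous_pow hGc n, ?_⟩
  rw [← hdiv, ← conjRotation_iterate]
  exact hG.pow n

end conjRotation

lemma circleRotationNumber_eq_of_isLift {g : UnitAddCircle ≃ₜ UnitAddCircle}
    {G : CircleDeg1Lift} (hG : G.IsLift g) : circleRotationNumber g = τ G := by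
  have hex : ∃ G : CircleDeg1Lift, ∀ x : ℝ, ((G x : ℝ) : UnitAddCircle) = g x := ⟨G, hG⟩
  rw [circleRotationNumber, dif_pos hex]
  exact CircleDeg1Lift.IsLift.coe_translationNumber_eq hex.choose_spec hG g.surjective

section conjRotationNumber

variable (φ : UnitAddCircle ≃ₜ UnitAddCircle)

noncomputable def conjRotationNumber : UnitAddCircle →+ UnitAddCircle :=
  AddMonoidHom.mk' (fun β => circleRotationNumber (conjRotation φ β)) fun β γ => by
    obtain ⟨A, -, hA⟩ := exists_isLift_conjRotation φ β
    obtain ⟨B, -, hB⟩ := exists_isLift_conjRotation φ γ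
    have hAB : (A * B).IsLift (conjRotation φ (β + γ)) := by
      rw [add_comm, conjRotation_add]
      exact hA.mul hB
    rw [circleRotationNumber_eq_of_isLift hAB, circleRotationNumber_eq_of_isLift hA,
      circleRotationNumber_eq_of_isLift hB,
      hA.translationNumber_mul hB (conjRotation_commute φ β γ)
        ((conjRotation φ β).surjective.comp (conjRotation φ γ).surjective),
      AddCircle.coe_add]

lemma conjRotationNumber_apply (β : UnitAddCircle) :
    conjRotationNumber φ β = circleRotationNumber (conjRotation φ β) := rfl

lemma continuous_conjRotationNumber : Continuous (conjRotationNumber φ) := by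
  refine continuous_of_continuousAt_zero _ ?_
  rw [ContinuousAt, map_zero, Metric.tendsto_nhds]
  intro ε hε
  filter_upwards [eventually_exists_isLift_conjRotation φ (ε := min (ε / 2) 2⁻¹)
    (by positivity) (min_le_right _ _)] with γ hγ
  obtain ⟨G, -, hG, hGτ⟩ := hγ
  have hsmall : |τ G| ≤ |(1 : ℝ)| / 2 := by
    rw [abs_one]; linarith [min_le_right (ε / 2) 2⁻¹]
  rw [dist_zero_right, conjRotationNumber_apply, circleRotationNumber_eq_of_isLift hG,
    (AddCircle.norm_coe_eq_abs_iff (p := 1) one_ne_zero).mpr hsmall]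
  linarith [min_le_left (ε / 2) 2⁻¹]

lemma injective_conjRotationNumber : Injective (conjRotationNumber φ) := by
  refine (injective_iff_map_eq_zero _).mpr fun δ hδ => ?_
  obtain ⟨G, hGc, hG⟩ := exists_isLift_conjRotation φ δ
  rw [conjRotationNumber_apply, circleRotationNumber_eq_of_isLift hG] at hδ
  obtain ⟨y, hy⟩ := hG.exists_isFixedPt hGc hδ
  simpa using congrArg φ hy

end conjRotationNumber

lemma eq_add_map_zero_of_map_add {G : Type*} [AddCommGroup G] [TopologicalSpace G]
    [IsTopologicalAddGroup G] [T2Space G] {a : G} (ha : DenseRange (· • a : ℤ → G))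
    {ψ : G → G} (hψ : Continuous ψ) (h : ∀ x, ψ (x + a) = ψ x + a) (x : G) : ψ x = x + ψ 0 := by
  have hper : Function.Periodic (fun x => ψ x - x) a := fun x => by
    simp only [h, add_sub_add_right_eq_sub]
  have := ha.induction_on (p := fun x => ψ x - x = ψ 0 - 0) x
    (isClosed_eq (hψ.sub continuous_id) continuous_const)
    fun n => by simpa using hper.zsmul n 0
  rwa [sub_zero, sub_eq_iff_eq_add'] at this

lemma exists_eq_conjRotation_of_commute {α : ℝ} (hα : Irrational α)
    {h φ : UnitAddCircle ≃ₜ UnitAddCircle}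
    (hconj : ∀ x, φ (h (φ.symm x)) = x + (α : UnitAddCircle))
    {g : UnitAddCircle ≃ₜ UnitAddCircle} (hg : ∀ x, g (h x) = h (g x)) :
    ∃ β, g = conjRotation φ β := by
  have hdense : DenseRange (· • (α : UnitAddCircle) : ℤ → UnitAddCircle) :=
    AddCircle.denseRange_zsmul_coe_iff.mpr (by rwa [div_one])
  let ψ : UnitAddCircle → UnitAddCircle := φ ∘ g ∘ φ.symm
  have hψ : ∀ x, ψ (x + α) = ψ x + α := fun x => by
    rw [← hconj (ψ x)]
    simp only [ψ, comp_apply, φ.symm_apply_apply, ← hg, ← hconj x]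
  refine ⟨ψ 0, Homeomorph.ext fun y => ?_⟩
  have hy := eq_add_map_zero_of_map_add hdense (by fun_prop) hψ (φ y)
  rw [conjRotation_apply, ← hy]
  simp [ψ]

/-- For a circle homeomorphism `h` conjugate to an irrational rotation, the rotation
number map restricted to the centralizer `Z⁰(h)` is an injective group homomorphism into
`S¹ = ℝ/ℤ`, continuous for the uniform (`C⁰`) topology. -/
theorem stmt_5 (α : ℝ) (hα : Irrational α) (h φ : UnitAddCircle ≃ₜ UnitAddCircle)
    (hconj : ∀ x, φ (h (φ.symm x)) = x + (α : UnitAddCircle)) :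
    Set.InjOn circleRotationNumber
        {g : UnitAddCircle ≃ₜ UnitAddCircle | ∀ x, g (h x) = h (g x)} ∧
    (∀ g₁ g₂ : UnitAddCircle ≃ₜ UnitAddCircle,
        (∀ x, g₁ (h x) = h (g₁ x)) → (∀ x, g₂ (h x) = h (g₂ x)) →
        circleRotationNumber (g₁.trans g₂)
          = circleRotationNumber g₁ + circleRotationNumber g₂) ∧
    (∀ (u : ℕ → UnitAddCircle ≃ₜ UnitAddCircle) (g : UnitAddCircle ≃ₜ UnitAddCircle),
        (∀ k x, (u k) (h x) = h ((u k) x)) → (∀ x, g (h x) = h (g x)) →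
        TendstoUniformly (fun k x => (u k) x) (fun x => g x) Filter.atTop →
        Filter.Tendsto (fun k => circleRotationNumber (u k)) Filter.atTop
          (nhds (circleRotationNumber g))) := by
  have hcentral := fun {g} hg => exists_eq_conjRotation_of_commute hα hconj (g := g) hg
  refine ⟨?_, fun g₁ g₂ hg₁ hg₂ => ?_, fun u g hu hg hconv => ?_⟩
  · rintro g₁ hg₁ g₂ hg₂ heq
    obtain ⟨β₁, rfl⟩ := hcentral hg₁
    obtain ⟨β₂, rfl⟩ := hcentral hg₂
    rw [injective_conjRotationNumber φ heq]
  · obtain ⟨β₁, rfl⟩ := hcentral hg₁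
    obtain ⟨β₂, rfl⟩ := hcentral hg₂
    rw [← conjRotation_add]
    exact map_add (conjRotationNumber φ) β₁ β₂
  · choose β hβ using fun k => hcentral (hu k)
    obtain ⟨β₀, rfl⟩ := hcentral hg
    have hβ_tendsto : Tendsto β atTop (𝓝 β₀) := by
      simpa [hβ, Function.comp_def] using
        (φ.continuous.tendsto _).comp (hconv.tendsto_at (φ.symm 0))
    simp only [hβ]
    exact ((continuous_conjRotationNumber φ).tendsto β₀).comp hβ_tendsto
end

section
/- Let D ⊂ ℂ^q be an open polydisc, D' ⊂ D a relatively compact open polydisc, and (f_k) a sequence of injective holomorphic maps f_k: D → ℂ^q that are uniformly bounded, such that each f_k(D') contains a fixed polydisc D''. Then there is a subsequence (f_{k_j}) converging uniformly on compact subsets of D to a holomorphic map f, and if f is injective on D', the inverse maps f_{k_j}^{-1} converge on D'' to f^{-1}. -/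
/-!
Cauchy estimates (Schwarz's lemma) give all the maps `f k` a common modulus of continuity at each
point of `D`, so the family is equicontinuous; a diagonal subsequence converging on a countable
dense set then converges locally uniformly (Arzelà–Ascoli). The same estimates applied to
differences `f m - f n` make the derivatives converge locally uniformly too, so the limit `F` is
holomorphic.

For the inverses, let `x j ∈ D'` with `f j (x j) = w`. At any cluster point `y ∈ closure D'`
uniform convergence gives `F y = w`. As `D''` is open, `f j y ∈ D''` for some `j`, so
`f j y = f j p` with `p ∈ D'`, and injectivity of `f j` forces `y = p ∈ D'`. Injectivity of `F` on
`D'` makes this cluster point unique, and compactness of `closure D'` gives convergence.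
-/

/-- An open polydisc in `ℂ^q`. -/
def IsPolydisc {q : ℕ} (S : Set (EuclideanSpace ℂ (Fin q))) : Prop :=
  ∃ (a : EuclideanSpace ℂ (Fin q)) (r : Fin q → ℝ), (∀ i, 0 < r i) ∧
    S = {z | ∀ i, ‖z i - a i‖ < r i}

open Filter Metric Set Function Topology

namespace IsPolydisc

variable {q : ℕ} {S : Set (EuclideanSpace ℂ (Fin q))}

theorem isOpen (h : IsPolydisc S) : IsOpen S := by
  obtain ⟨a, r, -, rfl⟩ := h
  simp only [ofPred_forall]
  exact isOpen_iInter_of_finite fun i => isOpen_lt (by fun_prop) continuous_const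

theorem isBounded (h : IsPolydisc S) : Bornology.IsBounded S := by
  obtain ⟨a, r, -, rfl⟩ := h
  refine (isBounded_closedBall (x := a) (r := √(∑ i, r i ^ 2))).subset fun z hz => ?_
  rw [mem_closedBall, EuclideanSpace.dist_eq]
  gcongr with i
  rw [Complex.dist_eq]
  exact (hz i).le

end IsPolydisc

section ArzelaAscoli

variable {X Y : Type*}

theorem uniformCauchySeqOn_of_equicontinuousAt [TopologicalSpace X] [PseudoMetricSpace Y]
    {f : ℕ → X → Y} {K s : Set X} (hK : IsCompact K) (hf : ∀ x ∈ K, EquicontinuousAt f x)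
    (hKs : K ⊆ closure s) (hs : ∀ z ∈ s, CauchySeq fun n => f n z) :
    UniformCauchySeqOn f atTop K := by
  rw [Metric.uniformCauchySeqOn_iff]
  intro ε hε
  have hε5 : 0 < ε / 5 := by positivity
  set V : X → Set X := fun x => {y | ∀ n, dist (f n x) (f n y) < ε / 5}
  have hV : ∀ x ∈ K, V x ∈ 𝓝 x := fun x hx =>
    Metric.equicontinuousAt_iff_right.mp (hf x hx) _ hε5
  have hVs : ∀ x ∈ K, ∃ z ∈ s, z ∈ V x := fun x hx =>
    (mem_closure_iff_nhds.mp (hKs hx) _ (hV x hx)).imp fun z hz => ⟨hz.2, hz.1⟩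
  choose! z hzs hzV using hVs
  choose! N hN using fun x (hx : x ∈ K) =>
    Metric.cauchySeq_iff.mp (hs (z x) (hzs x hx)) _ hε5
  obtain ⟨t, htK, hKt⟩ := hK.elim_nhds_subcover V hV
  refine ⟨t.sup N, fun m hm n hn y hy => ?_⟩
  obtain ⟨x, hxt, hyx⟩ := mem_iUnion₂.mp (hKt hy)
  have hx := htK x hxt
  have hNx : N x ≤ t.sup N := Finset.le_sup hxt
  calc dist (f m y) (f n y)
      ≤ dist (f m y) (f m x) + dist (f m x) (f m (z x)) + dist (f m (z x)) (f n (z x))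
          + dist (f n (z x)) (f n x) + dist (f n x) (f n y) := by
        linarith [dist_triangle4 (f m y) (f m x) (f m (z x)) (f n (z x)),
          dist_triangle4 (f m y) (f n (z x)) (f n x) (f n y)]
    _ < ε / 5 + ε / 5 + ε / 5 + ε / 5 + ε / 5 := by
        gcongr
        · exact dist_comm (f m y) (f m x) ▸ hyx m
        · exact hzV x hx m
        · exact hN x hx m (hNx.trans hm) n (hNx.trans hn)
        · exact dist_comm (f n x) (f n (z x)) ▸ hzV x hx n
        · exact hyx n
    _ = ε := by ring

theorem exists_tendstoLocallyUniformlyOn_of_equicontinuousAt [TopologicalSpace X]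
    [LocallyCompactSpace X] [PseudoMetricSpace Y] [CompleteSpace Y] {f : ℕ → X → Y} {U s : Set X}
    (hU : IsOpen U) (hf : ∀ x ∈ U, EquicontinuousAt f x) (hUs : U ⊆ closure s)
    (hs : ∀ z ∈ s, CauchySeq fun n => f n z) :
    ∃ g : X → Y, TendstoLocallyUniformlyOn f g atTop U := by
  have hcauchy : ∀ K ⊆ U, IsCompact K → UniformCauchySeqOn f atTop K := fun K hKU hK =>
    uniformCauchySeqOn_of_equicontinuousAt hK (fun x hx => hf x (hKU hx)) (hKU.trans hUs) hs
  have hlim : ∀ x ∈ U, ∃ y, Tendsto (fun n => f n x) atTop (𝓝 y) := fun x hx =>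
    cauchySeq_tendsto_of_complete <|
      (hcauchy {x} (singleton_subset_iff.mpr hx) isCompact_singleton).cauchySeq rfl
  rcases U.eq_empty_or_nonempty with rfl | ⟨x₀, -⟩
  · exact ⟨f 0, fun _ _ x hx => hx.elim⟩
  have : Nonempty Y := ⟨f 0 x₀⟩
  choose! g hg using hlim
  refine ⟨g, (tendstoLocallyUniformlyOn_iff_forall_isCompact hU).mpr fun K hKU hK => ?_⟩
  exact (hcauchy K hKU hK).tendstoUniformlyOn_of_tendsto fun x hx => hg x (hKU hx)

theorem exists_strictMono_cauchySeq_of_isBounded [PseudoMetricSpace Y] [ProperSpace Y]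
    {f : ℕ → X → Y} {s : Set X} (hs : s.Countable)
    (hf : ∀ z ∈ s, Bornology.IsBounded (range fun n => f n z)) :
    ∃ φ : ℕ → ℕ, StrictMono φ ∧ ∀ z ∈ s, CauchySeq fun n => f (φ n) z := by
  have := hs.to_subtype
  have hK : IsCompact (univ.pi fun z : s => closure (range fun n => f n z)) :=
    isCompact_univ_pi fun z => (hf z z.2).isCompact_closure
  have hmem : ∀ n, (fun z : s => f n z) ∈ univ.pi fun z : s => closure (range fun n => f n z) :=
    fun n => mem_univ_pi.mpr fun z => subset_closure (mem_range_self n)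
  obtain ⟨L, -, φ, hφ, hlim⟩ := hK.tendsto_subseq hmem
  exact ⟨φ, hφ, fun z hz => (tendsto_pi_nhds.mp hlim ⟨z, hz⟩).cauchySeq⟩

theorem exists_strictMono_tendstoLocallyUniformlyOn_of_equicontinuousAt [TopologicalSpace X]
    [TopologicalSpace.SeparableSpace X] [LocallyCompactSpace X] [PseudoMetricSpace Y]
    [ProperSpace Y] {f : ℕ → X → Y} {U : Set X} (hU : IsOpen U) (hf : ∀ x ∈ U, EquicontinuousAt f x)
    (hbdd : ∀ x ∈ U, Bornology.IsBounded (range fun n => f n x)) :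
    ∃ φ : ℕ → ℕ, StrictMono φ ∧ ∃ g : X → Y, TendstoLocallyUniformlyOn (f ∘ φ) g atTop U := by
  obtain ⟨s, hs, hsd⟩ := TopologicalSpace.exists_countable_dense X
  obtain ⟨φ, hφ, hcauchy⟩ := exists_strictMono_cauchySeq_of_isBounded (hs.mono inter_subset_right)
    fun z hz => hbdd z hz.1
  exact ⟨φ, hφ, exists_tendstoLocallyUniformlyOn_of_equicontinuousAt hU
    (fun x hx => (hf x hx).comp φ) (hsd.open_subset_closure_inter hU) hcauchy⟩

end ArzelaAscoli

namespace Complex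

variable {E F : Type*} [NormedAddCommGroup E] [NormedSpace ℂ E] [NormedAddCommGroup F]
  [NormedSpace ℂ F]

theorem equicontinuousAt_of_norm_le {ι : Type*} {f : ι → E → F} {U : Set E} {C : ℝ} {x : E}
    (hU : IsOpen U) (hf : ∀ i, DifferentiableOn ℂ (f i) U) (hC : ∀ i, ∀ z ∈ U, ‖f i z‖ ≤ C)
    (hx : x ∈ U) : EquicontinuousAt f x := by
  obtain ⟨r, hr, hrU⟩ := Metric.isOpen_iff.mp hU x hx
  refine equicontinuousAt_of_continuity_modulus (fun y => 2 * C / r * dist y x) ?_ f ?_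
  · exact (by fun_prop : Continuous fun y => 2 * C / r * dist y x).tendsto' x 0 (by simp)
  filter_upwards [ball_mem_nhds x hr] with y hy i
  have hmaps : MapsTo (f i) (ball x r) (closedBall (f i x) (2 * C)) := fun z hz => by
    rw [mem_closedBall]
    linarith [dist_le_norm_add_norm (f i z) (f i x), hC i z (hrU hz), hC i x hx]
  rw [dist_comm]
  exact dist_le_div_mul_dist_of_mapsTo_ball ((hf i).mono hrU) hmaps hy

theorem uniformCauchySeqOn_fderiv_ball {f : ℕ → E → F} {x : E} {r : ℝ}
    (hf : ∀ n, DifferentiableOn ℂ (f n) (ball x (2 * r)))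
    (hcauchy : UniformCauchySeqOn f atTop (ball x (2 * r))) :
    UniformCauchySeqOn (fun n => fderiv ℂ (f n)) atTop (ball x r) := by
  rw [Metric.uniformCauchySeqOn_iff] at hcauchy ⊢
  intro ε hε
  rcases le_or_gt r 0 with hr | hr
  · exact ⟨0, fun _ _ _ _ y hy => absurd (pos_of_mem_ball hy) hr.not_gt⟩
  obtain ⟨N, hN⟩ := hcauchy (ε * r / 4) (by positivity)
  refine ⟨N, fun m hm n hn y hy => ?_⟩
  have hball : ball y r ⊆ ball x (2 * r) := ball_subset_ball' (by linarith [mem_ball.mp hy])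
  have hy' : y ∈ ball x (2 * r) := hball (mem_ball_self hr)
  set h := fun z => f m z - f n z
  have hh : DifferentiableOn ℂ h (ball y r) := ((hf m).sub (hf n)).mono hball
  have hmaps : MapsTo h (ball y r) (closedBall (h y) (ε * r / 2)) := fun z hz => by
    rw [mem_closedBall]
    have hz := hN m hm n hn z (hball hz)
    have hy := hN m hm n hn y hy'
    rw [dist_eq_norm] at hz hy
    linarith [dist_le_norm_add_norm (h z) (h y)]
  have hderiv : fderiv ℂ h y = fderiv ℂ (f m) y - fderiv ℂ (f n) y :=
    fderiv_sub ((hf m).differentiableAt (isOpen_ball.mem_nhds hy'))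
      ((hf n).differentiableAt (isOpen_ball.mem_nhds hy'))
  calc dist (fderiv ℂ (f m) y) (fderiv ℂ (f n) y) = ‖fderiv ℂ h y‖ := by
        rw [hderiv, dist_eq_norm]
    _ ≤ ε * r / 2 / r := norm_fderiv_le_div_of_mapsTo_ball hh hmaps hr
    _ < ε := by rw [div_right_comm, mul_div_cancel_right₀ _ hr.ne']; linarith

theorem differentiableOn_of_tendstoLocallyUniformlyOn [ProperSpace E] [CompleteSpace F]
    {f : ℕ → E → F} {g : E → F} {U : Set E} (hU : IsOpen U)
    (hf : ∀ n, DifferentiableOn ℂ (f n) U) (hfg : TendstoLocallyUniformlyOn f g atTop U) :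
    DifferentiableOn ℂ g U := by
  intro x hx
  obtain ⟨ρ, hρ, hρU⟩ := Metric.isOpen_iff.mp hU x hx
  set r := ρ / 4 with hr
  have hclosedBall : closedBall x (2 * r) ⊆ U :=
    (closedBall_subset_ball (by linarith [hr])).trans hρU
  have hballU : ball x (2 * r) ⊆ U := ball_subset_closedBall.trans hclosedBall
  have hfg' : TendstoUniformlyOn f g atTop (ball x (2 * r)) :=
    ((tendstoLocallyUniformlyOn_iff_forall_isCompact hU).mp hfg _ hclosedBall
      (isCompact_closedBall x _)).mono ball_subset_closedBall
  have hcauchy := uniformCauchySeqOn_fderiv_ball (fun n => (hf n).mono hballU)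
    hfg'.uniformCauchySeqOn
  have hlim : ∀ y ∈ ball x r, ∃ L, Tendsto (fun n => fderiv ℂ (f n) y) atTop (𝓝 L) :=
    fun y hy => cauchySeq_tendsto_of_complete (hcauchy.cauchySeq hy)
  choose! g' hg' using hlim
  have hsub : ball x r ⊆ U := (ball_subset_ball (by linarith [hr])).trans hρU
  refine (hasFDerivAt_of_tendstoUniformlyOn isOpen_ball
    (hcauchy.tendstoUniformlyOn_of_tendsto hg')
    (fun n y hy => ((hf n).differentiableAt (hU.mem_nhds (hsub hy))).hasFDerivAt)
    (fun y hy => hfg.tendsto_at (hsub hy)) (mem_ball_self (by positivity))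
    ).differentiableAt.differentiableWithinAt

theorem exists_strictMono_tendstoLocallyUniformlyOn [ProperSpace E] [ProperSpace F]
    {f : ℕ → E → F} {U : Set E} {C : ℝ} (hU : IsOpen U) (hf : ∀ n, DifferentiableOn ℂ (f n) U)
    (hC : ∀ n, ∀ z ∈ U, ‖f n z‖ ≤ C) :
    ∃ φ : ℕ → ℕ, StrictMono φ ∧ ∃ g : E → F,
      DifferentiableOn ℂ g U ∧ TendstoLocallyUniformlyOn (f ∘ φ) g atTop U := by
  obtain ⟨φ, hφ, g, hg⟩ := exists_strictMono_tendstoLocallyUniformlyOn_of_equicontinuousAt hU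
    (fun x hx => equicontinuousAt_of_norm_le hU hf hC hx) fun x hx =>
      (isBounded_closedBall (x := 0) (r := C)).subset <| range_subset_iff.mpr fun n => by
        simpa using hC n x hx
  exact ⟨φ, hφ, g, differentiableOn_of_tendstoLocallyUniformlyOn hU (fun n => hf (φ n)) hg, hg⟩

end Complex

section Inverses

variable {X Y : Type*} [UniformSpace Y]

theorem mem_of_tendsto_of_subset_image {ι : Type*} {l : Filter ι} [l.NeBot] {f : ι → X → Y}
    {s S : Set X} {t : Set Y} {y : X} {z : Y} (hinj : ∀ i, InjOn (f i) S) (hsS : s ⊆ S)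
    (hy : y ∈ S) (ht : IsOpen t) (hts : ∀ i, t ⊆ f i '' s)
    (hlim : Tendsto (fun i => f i y) l (𝓝 z)) (hz : z ∈ t) : y ∈ s := by
  obtain ⟨i, hi⟩ := (hlim.eventually (ht.mem_nhds hz)).exists
  obtain ⟨p, hp, hpy⟩ := hts i hi
  exact hinj i (hsS hp) hy hpy ▸ hp

theorem tendsto_invFunOn_of_tendstoUniformlyOn [TopologicalSpace X] [Nonempty X] [T2Space Y]
    {f : ℕ → X → Y} {g : X → Y} {s : Set X} {t : Set Y} (hs : IsCompact (closure s))
    (hfg : TendstoUniformlyOn f g atTop (closure s)) (hg : ContinuousOn g (closure s))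
    (hinj : ∀ n, InjOn (f n) (closure s)) (hginj : InjOn g s) (ht : IsOpen t)
    (hts : ∀ n, t ⊆ f n '' s) {w : Y} (hw : w ∈ t) :
    Tendsto (fun n => invFunOn (f n) s w) atTop (𝓝 (invFunOn g s w)) := by
  set x := fun n => invFunOn (f n) s w
  have hx : ∀ n, x n ∈ s ∧ f n (x n) = w := fun n =>
    have hex : ∃ p ∈ s, f n p = w := hts n hw
    ⟨invFunOn_mem hex, invFunOn_eq hex⟩
  refine hs.tendsto_nhds_of_unique_mapClusterPt
    (Eventually.of_forall fun n => subset_closure (hx n).1) fun y hy hcluster => ?_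
  obtain ⟨𝒰, h𝒰, hx𝒰⟩ := mapClusterPt_iff_ultrafilter.mp hcluster
  have hgy : g y = w := by
    have hfg𝒰 : TendstoUniformlyOn f g 𝒰 (closure s) := fun u hu => (hfg u hu).filter_mono h𝒰
    have hlim : Tendsto (fun n => f n (x n)) 𝒰 (𝓝 (g y)) := hfg𝒰.tendsto_comp (hg y hy)
      (tendsto_nhdsWithin_iff.mpr ⟨hx𝒰, Eventually.of_forall fun n => subset_closure (hx n).1⟩)
    simp only [fun n => (hx n).2] at hlim
    exact tendsto_nhds_unique hlim tendsto_const_nhds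
  have hys : y ∈ s := mem_of_tendsto_of_subset_image hinj subset_closure hy ht hts
    (hfg.tendsto_at hy) (hgy ▸ hw)
  have hex : ∃ p ∈ s, g p = w := ⟨y, hys, hgy⟩
  exact hginj hys (invFunOn_mem hex) (hgy.trans (invFunOn_eq hex).symm)

end Inverses

/-- Montel-type statement: a uniformly bounded sequence of injective holomorphic
maps `f k : D → ℂ^q`, with `f k (D') ⊇ D''` for polydiscs `D'' ⊆ f k (D')`, `D̄' ⊆ D`, has a
subsequence converging locally uniformly on `D` to a holomorphic `F`; and if `F` is injective on
`D'`, the inverse maps converge on `D''` to `F⁻¹`. -/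
theorem stmt_13 (q : ℕ) (D D' D'' : Set (EuclideanSpace ℂ (Fin q)))
    (hD : IsPolydisc D) (hD' : IsPolydisc D') (hD'' : IsPolydisc D'')
    (hsub : closure D' ⊆ D)
    (f : ℕ → EuclideanSpace ℂ (Fin q) → EuclideanSpace ℂ (Fin q))
    (hhol : ∀ k, DifferentiableOn ℂ (f k) D)
    (hinj : ∀ k, Set.InjOn (f k) D)
    (hbdd : ∃ C : ℝ, ∀ k, ∀ z ∈ D, ‖f k z‖ ≤ C)
    (hcover : ∀ k, D'' ⊆ f k '' D') :
    ∃ φ : ℕ → ℕ, StrictMono φ ∧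
      ∃ F : EuclideanSpace ℂ (Fin q) → EuclideanSpace ℂ (Fin q),
        DifferentiableOn ℂ F D ∧
        TendstoLocallyUniformlyOn (fun j => f (φ j)) F Filter.atTop D ∧
        (Set.InjOn F D' → ∀ w ∈ D'',
          Filter.Tendsto (fun j => Function.invFunOn (f (φ j)) D' w) Filter.atTop
            (nhds (Function.invFunOn F D' w))) := by
  obtain ⟨C, hC⟩ := hbdd
  obtain ⟨φ, hφ, F, hFD, hfF⟩ :=
    Complex.exists_strictMono_tendstoLocallyUniformlyOn hD.isOpen hhol hC
  have hK : IsCompact (closure D') := hD'.isBounded.isCompact_closure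
  refine ⟨φ, hφ, F, hFD, hfF, fun hFinj w hw => ?_⟩
  exact tendsto_invFunOn_of_tendstoUniformlyOn hK
    ((tendstoLocallyUniformlyOn_iff_forall_isCompact hD.isOpen).mp hfF _ hsub hK)
    (hFD.continuousOn.mono hsub) (fun n => (hinj (φ n)).mono hsub) hFinj hD''.isOpen
    (fun n => hcover (φ n)) hw
end
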